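/- arXiv:0708.3224 — 3 statements merged into one kernel-verified Lean document; each statement's English description precedes it below -/
import Mathlib

section
/- Let a_1, ..., a_k be positive integers with gcd(a_1, ..., a_k) = d. Then the state complexity of the unary language {0^{a_1}, ..., 0^{a_k}}* equals d·(g(a_1/d, ..., a_k/d) + 1) + 1. -/
/-!
Over a one-letter alphabet a word is determined by its length, so `S∗` is the language of the
lengths in the additive monoid generated by the `a i`, which is `d` times the numerical semigroup
generated by the `a i / d`. This length set `A` omits `d * g` and, above `d * g`, consists exactly
of the multiples of `d`. A lasso automaton, a path of `d * g + 1` states leading into a cycle of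
`d` states, accepts it. Conversely the words of lengths `0, …, d * g + d` have pairwise distinct
left quotients: padding them to `d * g` or to a large multiple of `d` separates any two, so no
automaton with fewer states exists.
-/

open Computability

/-- The state complexity of a language: the least number of states of a complete DFA
accepting it. -/
noncomputable def stateComplexity {α : Type} (L : Language α) : ℕ :=
  sInf {n : ℕ | ∃ M : DFA α (Fin n), M.accepts = L}

def unaryLanguage (A : Set ℕ) : Language Unit :=
  {w | w.length ∈ A}

@[simp]
theorem mem_unaryLanguage {A : Set ℕ} {w : List Unit} : w ∈ unaryLanguage A ↔ w.length ∈ A :=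
  Iff.rfl

theorem List.unit_ext {u v : List Unit} (h : u.length = v.length) : u = v :=
  List.ext_getElem h fun _ _ _ => rfl

theorem unaryLanguage_injective : Function.Injective unaryLanguage := by
  intro A B h
  ext n
  simpa using congrArg (List.replicate n () ∈ ·) h

theorem leftQuotient_unaryLanguage (A : Set ℕ) (p : ℕ) :
    (unaryLanguage A).leftQuotient (List.replicate p ()) = unaryLanguage ((p + ·) ⁻¹' A) := by
  ext w
  simp [Language.mem_leftQuotient]

theorem kstar_range_replicate {ι : Type*} (a : ι → ℕ) :
    KStar.kstar (α := Language Unit) (Set.range fun i => List.replicate (a i) ()) =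
      unaryLanguage (AddSubmonoid.closure (Set.range a)) := by
  ext w
  refine Language.mem_kstar.trans ?_
  rw [mem_unaryLanguage]
  constructor
  · rintro ⟨L, rfl, hL⟩
    rw [List.length_flatten]
    refine AddSubmonoid.list_sum_mem _ fun n hn => ?_
    obtain ⟨y, hy, rfl⟩ := List.mem_map.1 hn
    obtain ⟨i, rfl⟩ := hL y hy
    exact AddSubmonoid.subset_closure ⟨i, by simp⟩
  · intro hw
    obtain ⟨l, hl, hsum⟩ := AddSubmonoid.exists_list_of_mem_closure hw
    refine ⟨l.map (List.replicate · ()), ?_, ?_⟩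
    · exact List.unit_ext (by simp [List.length_flatten, Function.comp_def, hsum])
    · simp only [List.mem_map]
      rintro _ ⟨n, hn, rfl⟩
      obtain ⟨i, rfl⟩ := hl n hn
      exact ⟨i, rfl⟩

theorem DFA.card_le_of_injective_leftQuotient {α σ ι : Type*} [Fintype σ] [Fintype ι]
    (M : DFA α σ) (w : ι → List α) (hw : Function.Injective (M.accepts.leftQuotient ∘ w)) :
    Fintype.card ι ≤ Fintype.card σ := by
  rw [Language.leftQuotient_accepts] at hw
  exact Fintype.card_le_of_injective (M.eval ∘ w) (Function.Injective.of_comp hw)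

def lassoState (N p n : ℕ) : ℕ :=
  if n < N then n else N + (n - N) % p

section LassoState

variable {N p : ℕ}

theorem lassoState_zero : lassoState N p 0 = 0 := by
  unfold lassoState; split_ifs <;> simp_all

theorem lassoState_lt (hp : 0 < p) (n : ℕ) : lassoState N p n < N + p := by
  unfold lassoState
  split_ifs
  · omega
  · have := Nat.mod_lt (n - N) hp
    omega

theorem lassoState_lassoState_add_one (n : ℕ) :
    lassoState N p (lassoState N p n + 1) = lassoState N p (n + 1) := by
  unfold lassoState
  by_cases hn : n < N
  · simp only [hn, if_true]
  · have h1 : N + (n - N) % p + 1 - N = (n - N) % p + 1 := by omega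
    have h2 : n + 1 - N = n - N + 1 := by omega
    simp only [hn, if_false, show ¬ N + (n - N) % p + 1 < N by omega, show ¬ n + 1 < N by omega,
      h1, h2, Nat.mod_add_mod]

theorem mem_iff_lassoState_mem {A : Set ℕ} (hA : ∀ n, N ≤ n → (n + p ∈ A ↔ n ∈ A)) (n : ℕ) :
    lassoState N p n ∈ A ↔ n ∈ A := by
  have hper : ∀ k x, N ≤ x → (x + p * k ∈ A ↔ x ∈ A) := by
    intro k x hx
    induction k with
    | zero => simp
    | succ k ih => rw [Nat.mul_succ, ← add_assoc, hA _ (by omega), ih]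
  unfold lassoState
  split_ifs with hn
  · rfl
  · conv_rhs => rw [show n = N + (n - N) % p + p * ((n - N) / p) by
      have := Nat.mod_add_div (n - N) p; omega]
    exact (hper _ _ (by omega)).symm

end LassoState

/-- States `0, …, N - 1` form a path leading into the cycle `N, …, N + p - 1`. -/
def lassoDFA (A : Set ℕ) (N : ℕ) {p : ℕ} (hp : 0 < p) : DFA Unit (Fin (N + p)) where
  step s _ := ⟨lassoState N p (s + 1), lassoState_lt hp _⟩
  start := ⟨0, by omega⟩
  accept := {s | (s : ℕ) ∈ A}

theorem lassoDFA_eval_replicate (A : Set ℕ) (N : ℕ) {p : ℕ} (hp : 0 < p) (n : ℕ) :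
    ((lassoDFA A N hp).eval (List.replicate n ()) : ℕ) = lassoState N p n := by
  induction n with
  | zero => exact lassoState_zero.symm
  | succ n ih =>
    rw [List.replicate_succ', DFA.eval_append_singleton, ← lassoState_lassoState_add_one, ← ih]
    rfl

theorem accepts_lassoDFA {A : Set ℕ} {N p : ℕ} (hp : 0 < p) (hA : ∀ n, N ≤ n → (n + p ∈ A ↔ n ∈ A)) :
    (lassoDFA A N hp).accepts = unaryLanguage A := by
  ext w
  obtain ⟨n, rfl⟩ : ∃ n, w = List.replicate n () := ⟨w.length, List.unit_ext (by simp)⟩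
  rw [DFA.mem_accepts, mem_unaryLanguage, List.length_replicate,
    ← mem_iff_lassoState_mem hA, ← lassoDFA_eval_replicate A N hp]
  rfl

section Separation

variable {A : Set ℕ} {d g : ℕ}

theorem exists_not_add_mem_iff (hd : 0 < d) (hgA : d * g ∉ A)
    (hA : ∀ n, d * g < n → (n ∈ A ↔ d ∣ n)) {p q : ℕ} (hpq : p < q) (hq : q ≤ d * g + d) :
    ∃ t, ¬(p + t ∈ A ↔ q + t ∈ A) := by
  by_cases hdvd : d ∣ q - p
  · -- `d * g` is rejected, while `d * g + (q - p)` is a larger multiple of `d`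
    obtain ⟨s, hs⟩ := hdvd
    have hds : d ≤ d * s := Nat.le_mul_of_pos_right d (Nat.pos_of_ne_zero (by rintro rfl; omega))
    refine ⟨d * g - p, fun h => hgA ?_⟩
    rw [show p + (d * g - p) = d * g by omega, show q + (d * g - p) = d * g + (q - p) by omega,
      hA (d * g + (q - p)) (by omega)] at h
    exact h.2 (Nat.dvd_add (dvd_mul_right d g) ⟨s, hs⟩)
  · -- `p + t` is a large multiple of `d`, while `q + t` is not a multiple of `d`
    have hmul : d * g + d + d * p = d * (g + 1 + p) := by ring
    have hp : p ≤ d * p := Nat.le_mul_of_pos_left p hd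
    refine ⟨d * (g + 1 + p) - p, fun h => hdvd ?_⟩
    have hmem : p + (d * (g + 1 + p) - p) ∈ A := by
      rw [hA _ (by omega), show p + (d * (g + 1 + p) - p) = d * (g + 1 + p) by omega]
      exact dvd_mul_right d _
    rw [h, hA _ (by omega), show q + (d * (g + 1 + p) - p) = d * (g + 1 + p) + (q - p) by omega,
      Nat.dvd_add_right (dvd_mul_right d _)] at hmem
    exact hmem

theorem injOn_preimage_add (hd : 0 < d) (hgA : d * g ∉ A)
    (hA : ∀ n, d * g < n → (n ∈ A ↔ d ∣ n)) :
    Set.InjOn (fun p => (p + ·) ⁻¹' A) (Set.Iic (d * g + d)) := by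
  intro p hp q hq h
  by_contra hne
  wlog hpq : p < q generalizing p q
  · exact this hq hp h.symm (Ne.symm hne) (by omega)
  obtain ⟨t, ht⟩ := exists_not_add_mem_iff hd hgA hA hpq hq
  exact ht (Set.ext_iff.1 h t)

theorem stateComplexity_unaryLanguage (hd : 0 < d) (hgA : d * g ∉ A)
    (hA : ∀ n, d * g < n → (n ∈ A ↔ d ∣ n)) :
    stateComplexity (unaryLanguage A) = d * (g + 1) + 1 := by
  refine IsLeast.csInf_eq ⟨?_, ?_⟩
  · have hper : ∀ n, d * g + 1 ≤ n → (n + d ∈ A ↔ n ∈ A) := fun n hn => by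
      rw [hA _ (by omega), hA _ (by omega), Nat.dvd_add_self_right]
    rw [show d * (g + 1) + 1 = d * g + 1 + d by ring]
    exact ⟨lassoDFA A _ hd, accepts_lassoDFA hd hper⟩
  · rintro m ⟨M, hM⟩
    have hinj : Function.Injective
        (M.accepts.leftQuotient ∘ fun i : Fin (d * (g + 1) + 1) => List.replicate i ()) := by
      intro i j hij
      simp only [Function.comp_apply, hM, leftQuotient_unaryLanguage] at hij
      have hsize : d * (g + 1) = d * g + d := mul_add_one d g
      have hi : (i : ℕ) ≤ d * g + d := by have := i.is_le; omega
      have hj : (j : ℕ) ≤ d * g + d := by have := j.is_le; omega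
      exact Fin.ext (injOn_preimage_add hd hgA hA hi hj (unaryLanguage_injective hij))
    simpa using M.card_le_of_injective_leftQuotient _ hinj

end Separation

section Frobenius

variable {s : Set ℕ} {g : ℕ}

theorem FrobeniusNumber.exists_ne_zero (hg : FrobeniusNumber g s) : ∃ n ∈ s, n ≠ 0 := by
  by_contra! hs
  have hbot : AddSubmonoid.closure s = ⊥ :=
    AddSubmonoid.closure_eq_of_le hs bot_le
  have := (frobeniusNumber_iff.1 hg).2 (g + 1) (Nat.lt_succ_self g)
  simp [hbot] at this

theorem FrobeniusNumber.mul_notMem_map_mulLeft (hg : FrobeniusNumber g s) {d : ℕ} (hd : 0 < d) :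
    d * g ∉ (AddSubmonoid.closure s).map (AddMonoidHom.mulLeft d) := by
  rintro ⟨m, hm, hdm⟩
  exact hg.1 (Nat.eq_of_mul_eq_mul_left hd hdm ▸ hm)

theorem FrobeniusNumber.mem_map_mulLeft_iff (hg : FrobeniusNumber g s) {d n : ℕ} (hn : d * g < n) :
    n ∈ (AddSubmonoid.closure s).map (AddMonoidHom.mulLeft d) ↔ d ∣ n := by
  constructor
  · rintro ⟨m, -, rfl⟩
    exact dvd_mul_right d m
  · rintro ⟨m, rfl⟩
    exact ⟨m, (frobeniusNumber_iff.1 hg).2 m (lt_of_mul_lt_mul_left' hn), rfl⟩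

end Frobenius

theorem closure_range_eq_map_mulLeft {ι : Type*} {a : ι → ℕ} {d : ℕ} (h : ∀ i, d ∣ a i) :
    AddSubmonoid.closure (Set.range a) =
      (AddSubmonoid.closure (Set.range fun i => a i / d)).map (AddMonoidHom.mulLeft d) := by
  rw [AddMonoidHom.map_mclosure, ← Set.range_comp]
  congr
  ext i
  simp [Nat.mul_div_cancel' (h i)]

theorem stateComplexity_unary_kstar_gcd_general (k : ℕ) (a : Fin k → ℕ)
    (d : ℕ) (hd : Finset.univ.gcd a = d)
    (g : ℕ)
    (hg : IsGreatest {n : ℕ | n ∉ AddSubmonoid.closure (Set.range (fun i => a i / d))} g)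
    (S : Language Unit) (hS : S = Set.range (fun i => List.replicate (a i) ())) :
    stateComplexity (S∗) = d * (g + 1) + 1 := by
  have hfrob : FrobeniusNumber g (Set.range fun i => a i / d) := hg
  have hd0 : 0 < d := by
    obtain ⟨_, ⟨i, rfl⟩, hi⟩ := hfrob.exists_ne_zero
    exact Nat.pos_of_ne_zero fun h => hi (by simp [h])
  have hdvd : ∀ i, d ∣ a i := fun i => hd ▸ Finset.gcd_dvd (Finset.mem_univ i)
  subst hS
  rw [kstar_range_replicate, closure_range_eq_map_mulLeft hdvd]
  exact stateComplexity_unaryLanguage hd0 (hfrob.mul_notMem_map_mulLeft hd0)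
    fun _ hn => hfrob.mem_map_mulLeft_iff hn

/-- For positive integers `a 1, …, a k` with gcd `d`, the state complexity of
the unary language `{0^{a 1}, …, 0^{a k}}∗` equals `d·(g(a 1/d, …, a k/d) + 1) + 1`. -/
theorem stateComplexity_unary_kstar_gcd (k : ℕ) (a : Fin k → ℕ) (ha : ∀ i, 0 < a i)
    (d : ℕ) (hd : Finset.univ.gcd a = d)
    (g : ℕ)
    (hg : IsGreatest {n : ℕ | n ∉ AddSubmonoid.closure (Set.range (fun i => a i / d))} g)
    (S : Language Unit) (hS : S = Set.range (fun i => List.replicate (a i) ())) :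
    stateComplexity (S∗) = d * (g + 1) + 1 :=
  stateComplexity_unary_kstar_gcd_general k a d hd g hg S hS
end

section
/- Let 0 < m < n < 2m and suppose S ⊆ Σ^m ∪ Σ^n has co-finite S*. Then gcd(m, n) = 1, S* ≠ Σ*, and the length of the longest word not in S* is at most g(m, l) = m·l − m − l, where l = m·|Σ|^{n−m} + (n−m). -/
/-!
Since `S∗` contains every long word, its lengths are not all divisible by `gcd m n`, and every
word `u` of length `m` lies in `S`: otherwise no word `(u x)ᵏ u` with `|x| = n - m` is in `S∗`,
because a factorisation must start with `u` or with `u x`.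

Put `t = n - m` and `K = |Σ|ᵗ`, and cut a word of length `K m + t` into `K` blocks of length
`m` followed by a tail of length `t`. If the word is not in `S∗`, no block followed by the first
`t` letters of the next piece lies in `S`. Two of the `K + 1` pieces share their prefix of
length `t`, so the blocks between them can be repeated without creating such a factor. Since
`t < m`, a factorisation into words of lengths `m` and `m + t` of a word of length `≢ 0 [MOD m]`
must use such a factor, so all the pumped words lie outside `S∗`: a contradiction. Hence `S∗`
contains every word whose length lies in the monoid generated by the coprime numbers `m` and
`l = K m + t`, and the Frobenius number `m l - m - l` bounds the rest.
-/

namespace List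

variable {β γ : Type*} {R : β → β → Prop}

theorem exists_eq_append_cons_append_cons_of_not_nodup_map {g : β → γ} {l : List β}
    (h : ¬ (l.map g).Nodup) : ∃ P q Q c T, l = P ++ q :: Q ++ c :: T ∧ g q = g c := by
  induction l with
  | nil => simp at h
  | cons a l ih =>
    rw [map_cons, nodup_cons, not_and_or, not_not] at h
    rcases h with ha | hl
    · obtain ⟨c, hc, hgc⟩ := mem_map.1 ha
      obtain ⟨Q, T, rfl⟩ := append_of_mem hc
      exact ⟨[], a, Q, c, T, rfl, hgc.symm⟩
    · obtain ⟨P, q, Q, c, T, rfl, hqc⟩ := ih hl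
      exact ⟨a :: P, q, Q, c, T, rfl, hqc⟩

theorem IsChain.pump_once {P Q T : List β} {q c : β} (hR : ∀ b, R b c → R b q)
    (h : IsChain R (P ++ q :: Q ++ c :: T)) :
    IsChain R (P ++ q :: Q ++ q :: Q ++ c :: T) := by
  obtain ⟨hPQ, hT, hlink⟩ := isChain_append.1 h
  have hQ : IsChain R (q :: Q) := hPQ.infix (suffix_append P _).isInfix
  refine (hPQ.append hQ fun b hb y hy => ?_).append hT fun b hb y hy => ?_
  · obtain rfl : y = q := by simpa using hy.symm
    exact hR b (hlink b hb c rfl)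
  · rw [getLast?_append_of_ne_nil _ (cons_ne_nil q Q)] at hb
    exact hlink b (by rwa [getLast?_append_of_ne_nil _ (cons_ne_nil q Q)]) y hy

theorem IsChain.pump {P Q T : List β} {q c : β} (hR : ∀ b, R b c → R b q)
    (h : IsChain R (P ++ q :: Q ++ c :: T)) (k : ℕ) :
    IsChain R (P ++ (replicate (k + 1) (q :: Q)).flatten ++ c :: T) := by
  induction k generalizing P with
  | zero => simpa using h
  | succ k ih =>
    have := ih (P := P ++ q :: Q) (by simpa using h.pump_once hR)
    simpa [replicate_succ] using this

theorem IsChain.exists_long_of_not_nodup_map {g : β → γ} {l : List β}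
    (hR : ∀ b c c', g c = g c' → R b c → R b c') (h : IsChain R l)
    (hl : ¬ (l.map g).Nodup) (N : ℕ) :
    ∃ l', IsChain R l' ∧ N ≤ l'.length ∧ l'.getLast? = l.getLast? ∧
      ∀ y ∈ l', y ∈ l := by
  obtain ⟨P, q, Q, c, T, rfl, hqc⟩ := exists_eq_append_cons_append_cons_of_not_nodup_map hl
  refine ⟨P ++ (replicate (N + 1) (q :: Q)).flatten ++ c :: T,
    h.pump (fun b => hR b c q hqc.symm) N, ?_, ?_, fun y hy => ?_⟩
  · have : N + 1 ≤ (N + 1) * (Q.length + 1) := Nat.le_mul_of_pos_right _ Q.length.succ_pos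
    simp only [length_append, length_flatten, map_replicate, sum_replicate, length_cons,
      smul_eq_mul]
    omega
  · rw [getLast?_append_of_ne_nil _ (cons_ne_nil c T),
      getLast?_append_of_ne_nil _ (cons_ne_nil c T)]
  · simp only [mem_append, mem_flatten, mem_replicate] at hy
    grind

theorem length_flatten_of_forall_length_eq {L : List (List β)} {m : ℕ}
    (h : ∀ b ∈ L, b.length = m) : L.flatten.length = L.length * m := by
  rw [length_flatten, map_eq_replicate_iff.2 h, sum_replicate, smul_eq_mul]

theorem exists_eq_flatten_append {m t k : ℕ} {w : List β} (hw : w.length = k * m + t) :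
    ∃ (bs : List (List β)) (x : List β), w = bs.flatten ++ x ∧ bs.length = k ∧
      (∀ b ∈ bs, b.length = m) ∧ x.length = t := by
  induction k generalizing w with
  | zero => exact ⟨[], w, rfl, rfl, by simp, by simpa using hw⟩
  | succ k ih =>
    obtain ⟨bs, x, hdrop, hlen, hbs, hx⟩ := ih (w := w.drop m) (by grind)
    refine ⟨w.take m :: bs, x, ?_, by simp [hlen], ?_, hx⟩
    · rw [flatten_cons, append_assoc, ← hdrop, take_append_drop]
    · simp only [mem_cons, forall_eq_or_imp, length_take]
      exact ⟨by grind, hbs⟩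

theorem not_nodup_map_take [Fintype β] {t : ℕ} {ys : List (List β)}
    (hys : ∀ y ∈ ys, t ≤ y.length) (hlen : Fintype.card β ^ t < ys.length) :
    ¬ (ys.map (take t)).Nodup := by
  classical
  intro hnd
  let W : Finset (List β) := Finset.univ.image fun v : List.Vector β t => v.toList
  have hsub : (ys.map (take t)).toFinset ⊆ W := by
    intro y hy
    obtain ⟨y, hy', rfl⟩ := mem_map.1 (mem_toFinset.1 hy)
    exact Finset.mem_image.2 ⟨⟨y.take t, by simp [hys y hy']⟩, Finset.mem_univ _, rfl⟩
  have := (Finset.card_le_card hsub).trans Finset.card_image_le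
  rw [toFinset_card_of_nodup hnd, length_map, Finset.card_univ, card_vector] at this
  omega

end List

open Computability

namespace Language

variable {α : Type*} {S : Language α}

theorem append_mem_kstar {u v : List α} (hu : u ∈ S∗) (hv : v ∈ S∗) : u ++ v ∈ S∗ :=
  kstar_mul_kstar S ▸ append_mem_mul hu hv

theorem exists_append_eq_of_mem_kstar {v : List α} (hv : v ∈ S∗) (hne : v ≠ []) :
    ∃ z ∈ S, ∃ u ∈ S∗, z ++ u = v := by
  rw [← one_add_mul_kstar, mem_add, mem_one] at hv
  exact mem_mul.1 (hv.resolve_left hne)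

theorem le_length_of_mem_kstar {m : ℕ} (hS : ∀ w ∈ S, m ≤ w.length) {v : List α}
    (hv : v ∈ S∗) (hne : v ≠ []) : m ≤ v.length := by
  obtain ⟨z, hz, u, -, rfl⟩ := exists_append_eq_of_mem_kstar hv hne
  have := hS z hz
  rw [List.length_append]
  omega

theorem dvd_length_of_mem_kstar {d : ℕ} (hS : ∀ w ∈ S, d ∣ w.length) {v : List α}
    (hv : v ∈ S∗) : d ∣ v.length := by
  obtain ⟨L, rfl, hL⟩ := mem_kstar.1 hv
  rw [List.length_flatten]
  exact List.dvd_sum fun k hk => by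
    obtain ⟨w, hw, rfl⟩ := List.mem_map.1 hk
    exact hS w (hL w hw)

theorem exists_forall_le_length_mem_of_finite_compl {L : Language α}
    (h : (Lᶜ : Set (List α)).Finite) : ∃ N, ∀ w : List α, N ≤ w.length → w ∈ L := by
  obtain ⟨N, hN⟩ := (h.image List.length).bddAbove
  refine ⟨N + 1, fun w hw => by_contra fun hwL => ?_⟩
  have := hN ⟨w, hwL, rfl⟩
  omega

theorem gcd_eq_one_of_forall_le_length_mem [Nonempty α] {m n N : ℕ}
    (hS : ∀ w ∈ S, w.length = m ∨ w.length = n)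
    (hN : ∀ w : List α, N ≤ w.length → w ∈ S∗) : Nat.gcd m n = 1 := by
  obtain ⟨a⟩ := ‹Nonempty α›
  have hdvd : ∀ k, N ≤ k → Nat.gcd m n ∣ k := fun k hk => by
    simpa using dvd_length_of_mem_kstar
      (fun w hw => (hS w hw).elim (· ▸ Nat.gcd_dvd_left m n) (· ▸ Nat.gcd_dvd_right m n))
      (hN (List.replicate k a) (by simpa))
  exact Nat.dvd_one.1 ((Nat.dvd_add_right (hdvd N le_rfl)).1 (hdvd (N + 1) (by omega)))

def fullLengths (S : Language α) : AddSubmonoid ℕ where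
  carrier := {k | ∀ w : List α, w.length = k → w ∈ S∗}
  zero_mem' w hw := List.length_eq_zero_iff.1 hw ▸ nil_mem_kstar S
  add_mem' {a b} ha hb w hw := by
    rw [← List.take_append_drop a w]
    exact append_mem_kstar (ha _ (by simp only [List.length_take]; omega))
      (hb _ (by simp only [List.length_drop]; omega))

variable {m t : ℕ}

/-- On a list of pieces, a `NoStraddle S m t`-chain says that the pieces before the last are
blocks of length `m` and that, in the flattened word, no factor of length `m + t` starting at a
multiple of `m` lies in `S`. -/
def NoStraddle (S : Language α) (m t : ℕ) (b c : List α) : Prop :=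
  b.length = m ∧ b ++ c.take t ∉ S

theorem isChain_noStraddle_of_notMem_kstar (hm : m ∈ fullLengths S) (ht : t ≤ m)
    {bs : List (List α)} {x : List α} (hbs : ∀ b ∈ bs, b.length = m) (hx : x.length = t)
    (h : bs.flatten ++ x ∉ S∗) : (bs ++ [x]).IsChain (NoStraddle S m t) := by
  induction bs with
  | nil => exact List.isChain_singleton x
  | cons b bs ih =>
    have hb : b.length = m := hbs b List.mem_cons_self
    have hbs' : ∀ b ∈ bs, b.length = m := fun b' hb' => hbs b' (List.mem_cons_of_mem b hb')
    have hsplit : (b :: bs).flatten ++ x = b ++ (bs.flatten ++ x) := by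
      rw [List.flatten_cons, List.append_assoc]
    have hv : bs.flatten ++ x ∉ S∗ := fun hv => h (hsplit ▸ append_mem_kstar (hm b hb) hv)
    refine (ih hbs' hv).cons fun c hc => ⟨hb, fun hbc => h ?_⟩
    have hrest := List.eq_cons_of_mem_head? hc
    have hc_len : t ≤ c.length := by
      have : c ∈ bs ++ [x] := by rw [hrest]; exact List.mem_cons_self
      rcases List.mem_append.1 this with hc | hc
      · exact (hbs' c hc).symm ▸ ht
      · exact (List.mem_singleton.1 hc) ▸ hx.ge
    have hvt : (bs.flatten ++ x).take t = c.take t := by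
      rw [show bs.flatten ++ x = c ++ (bs ++ [x]).tail.flatten by
        rw [← List.flatten_cons, ← hrest]; simp]
      exact List.take_append_of_le_length hc_len
    have hdrop : (bs.flatten ++ x).drop t ∈ S∗ := by
      refine ((fullLengths S).nsmul_mem hm bs.length) _ ?_
      simp [List.length_flatten_of_forall_length_eq hbs', hx]
    rw [hsplit, ← List.take_append_drop t (bs.flatten ++ x), ← List.append_assoc, hvt]
    exact append_mem_kstar ((le_kstar : S ≤ S∗) hbc) hdrop

theorem flatten_notMem_kstar_of_isChain_noStraddle
    (hS : ∀ w ∈ S, w.length = m ∨ w.length = m + t) (ht : 0 < t) (htm : t < m)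
    {ys : List (List α)} {x : List α} (hys : ∀ y ∈ ys, t ≤ y.length)
    (hlast : ys.getLast? = some x) (hx : x.length = t)
    (h : ys.IsChain (NoStraddle S m t)) : ys.flatten ∉ S∗ := by
  induction ys with
  | nil => simp at hlast
  | cons b ys ih =>
    rcases ys with _ | ⟨c, rest⟩
    · obtain rfl : b = x := by simpa using hlast
      intro hx_mem
      have := le_length_of_mem_kstar (m := m) (fun w hw => by rcases hS w hw with h | h <;> omega)
        (by simpa using hx_mem) (List.ne_nil_of_length_pos (hx ▸ ht))
      omega
    · obtain ⟨⟨hb, hbc⟩, hchain⟩ := List.isChain_cons_cons.1 h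
      have hc : t ≤ c.length := hys c (by simp)
      intro hmem
      obtain ⟨z, hz, u, hu, hzu⟩ := exists_append_eq_of_mem_kstar hmem
        (List.append_ne_nil_of_left_ne_nil (List.ne_nil_of_length_pos (by omega)) _)
      rw [List.flatten_cons] at hzu
      rcases hS z hz with hzm | hzn
      · have := (List.append_inj hzu (hzm.trans hb.symm)).2
        exact ih (fun y hy => hys y (List.mem_cons_of_mem b hy)) (by simpa using hlast) hchain
          (this ▸ hu)
      · apply hbc
        have := congrArg (List.take (m + t)) hzu
        rw [List.take_left' hzn, ← hb, List.take_length_add_append, List.flatten_cons,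
          List.take_append_of_le_length hc] at this
        exact this ▸ hz

theorem mem_of_length_eq [Nonempty α] (hm : 0 < m)
    (hS : ∀ w ∈ S, w.length = m ∨ w.length = m + t) {N : ℕ}
    (hN : ∀ w : List α, N ≤ w.length → w ∈ S∗) {u : List α} (hu : u.length = m) :
    u ∈ S := by
  by_contra huS
  obtain ⟨a⟩ := ‹Nonempty α›
  have hux : (u ++ List.replicate t a).length = m + t := by simp [hu]
  have hu_ne : u ≠ [] := List.ne_nil_of_length_pos (hu ▸ hm)
  have hpump : ∀ k, (List.replicate k (u ++ List.replicate t a)).flatten ++ u ∉ S∗ := by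
    intro k
    induction k with
    | zero =>
      intro hmem
      obtain ⟨z, hz, v, -, hzv⟩ := exists_append_eq_of_mem_kstar (by simpa using hmem) hu_ne
      have hzu : z.length = u.length := by
        have := congrArg List.length hzv
        rw [List.length_append] at this
        rcases hS z hz with h | h <;> omega
      exact huS ((List.append_inj (hzv.trans (List.append_nil u).symm) hzu).1 ▸ hz)
    | succ k ih =>
      intro hmem
      rw [List.replicate_succ, List.flatten_cons, List.append_assoc] at hmem
      obtain ⟨z, hz, v, hv, hzv⟩ :=
        exists_append_eq_of_mem_kstar hmem
          (List.append_ne_nil_of_left_ne_nil (by simp [hu_ne]) _)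
      rcases hS z hz with h | h
      · rw [List.append_assoc] at hzv
        exact huS ((List.append_inj hzv (h.trans hu.symm)).1 ▸ hz)
      · exact ih ((List.append_inj hzv (h.trans hux.symm)).2 ▸ hv)
  refine hpump N (hN _ ?_)
  have : N ≤ N * (m + t) := Nat.le_mul_of_pos_right N (by omega)
  simp only [List.length_append, List.length_flatten, List.map_replicate, hux, List.sum_replicate,
    smul_eq_mul, hu]
  omega

theorem card_pow_mul_add_mem_fullLengths [Fintype α]
    (hS : ∀ w ∈ S, w.length = m ∨ w.length = m + t) (ht : 0 < t) (htm : t < m)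
    (hm : m ∈ fullLengths S) {N : ℕ}
    (hN : ∀ w : List α, N ≤ w.length → w ∈ S∗) :
    Fintype.card α ^ t * m + t ∈ fullLengths S := by
  intro w hw
  by_contra hw_mem
  obtain ⟨bs, x, rfl, hlen, hbs, hx⟩ := List.exists_eq_flatten_append hw
  have hys : ∀ y ∈ bs ++ [x], t ≤ y.length := by
    intro y hy
    rcases List.mem_append.1 hy with hy | hy
    · exact (hbs y hy).symm ▸ htm.le
    · exact (List.mem_singleton.1 hy) ▸ hx.ge
  have hdup : ¬ ((bs ++ [x]).map (List.take t)).Nodup :=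
    List.not_nodup_map_take hys (by simp [hlen])
  obtain ⟨ys, hchain, hN_le, hlast, hsub⟩ :=
    (isChain_noStraddle_of_notMem_kstar hm htm.le hbs hx hw_mem).exists_long_of_not_nodup_map
      (fun b c c' hcc' => by rw [NoStraddle, NoStraddle, hcc']; exact id) hdup N
  refine flatten_notMem_kstar_of_isChain_noStraddle hS ht htm (fun y hy => hys y (hsub y hy))
    (by simpa using hlast) hx hchain (hN _ ?_)
  calc N ≤ ys.length := hN_le
    _ ≤ ys.flatten.length := by
      rw [List.length_flatten, ← List.length_map List.length]
      refine List.length_le_sum_of_one_le _ fun k hk => ?_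
      obtain ⟨y, hy, rfl⟩ := List.mem_map.1 hk
      exact ht.trans_le (hys y (hsub y hy))

end Language

open Language in
/-- If `0 < m < n < 2m`, `S ⊆ Σ^m ∪ Σ^n`, and `S∗` is co-finite, then
`gcd(m,n) = 1`, `S∗ ≠ Σ∗`, and every word not in `S∗` has length at most
`g(m,l) = m·l − m − l` where `l = m·|Σ|^{n−m} + (n−m)`. -/
theorem longest_omitted_le_two_lengths {α : Type} [Fintype α] [Nonempty α] (m n : ℕ)
    (hm : 0 < m) (hmn : m < n) (hn2m : n < 2 * m)
    (S : Language α) (hS : ∀ w ∈ S, w.length = m ∨ w.length = n)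
    (hcof : Set.Finite ((S∗ : Language α)ᶜ))
    (l : ℕ) (hl : l = m * Fintype.card α ^ (n - m) + (n - m)) :
    Nat.gcd m n = 1 ∧
    (S∗ : Language α) ≠ (Set.univ : Set (List α)) ∧
    ∀ w : List α, w ∉ S∗ → w.length ≤ m * l - m - l := by
  obtain ⟨t, rfl⟩ : ∃ t, n = m + t := ⟨n - m, by omega⟩
  rw [Nat.add_sub_cancel_left] at hl
  obtain ⟨N, hN⟩ := exists_forall_le_length_mem_of_finite_compl hcof
  have hgcd : Nat.gcd m (m + t) = 1 := gcd_eq_one_of_forall_le_length_mem hS hN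
  have hmS : m ∈ fullLengths S := fun u hu =>
    (le_kstar : S ≤ S∗) (mem_of_length_eq hm hS hN hu)
  have hlS : l ∈ fullLengths S := by
    rw [hl, mul_comm]
    exact card_pow_mul_add_mem_fullLengths hS (by omega) (by omega) hmS hN
  have hml : Nat.Coprime m l := by
    rw [hl, Nat.coprime_mul_left_add_right]
    exact Nat.coprime_self_add_right.1 hgcd
  refine ⟨hgcd, fun huniv => ?_, fun w hw => ?_⟩
  · obtain ⟨a⟩ := ‹Nonempty α›
    have := le_length_of_mem_kstar (m := m) (fun w hw => by rcases hS w hw with h | h <;> omega)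
      (huniv ▸ Set.mem_univ [a] : [a] ∈ S∗) (List.cons_ne_nil a [])
    rw [List.length_singleton] at this
    omega
  · have hl1 : 1 < l := by
      have := Nat.le_mul_of_pos_right m (pow_pos (Fintype.card_pos (α := α)) t)
      omega
    refine (frobeniusNumber_pair hml (by omega) hl1).2 fun hmem => hw ?_
    exact AddSubmonoid.closure_le.2 (Set.pair_subset hmS hlS) hmem _ rfl
end

section
/- Let 0 < m < n < 2m, let S ⊆ Σ^m ∪ Σ^n with S* co-finite, and let τ be a word not in S* with |τ| = n + jm for some j ≥ 0. Then for every i with 1 ≤ i < m, the language (τ Σ^m)^{i−1} τ is disjoint from S*. -/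
/-!
Cofiniteness of `S∗` forces `gcd m n = 1` and `Σ^m ⊆ S`, so every word whose length is a multiple
of `m` lies in `S∗`; since `τ ∉ S∗`, no factor of `τ` of length `n` starting at a multiple of `m`
lies in `S`.

Cut `w = τ u₁ τ ⋯ u_{i-1} τ` into periods of length `M = |τ| + m` and read a factorization of `w`
over `S` from left to right, with `β` the number of `n`-blocks read so far and `a` the index of the
current period. The inequality `β ≤ a` persists: an `n`-block raises `β` without reaching the next
period only if `β = a`, and since `M ≡ n - m (mod m)` such a block then starts at a multiple of `m`
inside the `a`-th copy of `τ`, which is excluded. At the end `a = i - 1`, while counting lengths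
gives `(n - m) β ≡ (n - m) i (mod m)`, hence `β ≡ i (mod m)`: impossible for `β < i < m`.
-/

open Computability

namespace List

variable {α : Type*}

theorem IsPrefix.take_drop_eq {τ v : List α} (h : τ <+: v) {d k : ℕ}
    (hk : d + k ≤ τ.length) : (v.drop d).take k = (τ.drop d).take k := by
  obtain ⟨t, rfl⟩ := h
  rw [drop_append_of_le_length (by omega), take_append_of_le_length (by simp; omega)]

theorem length_flatten_eq_of_length_eq_or_eq {m n : ℕ} (hmn : m ≤ n) (bs : List (List α))
    (h : ∀ b ∈ bs, b.length = m ∨ b.length = n) :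
    bs.flatten.length = m * bs.length + (n - m) * bs.countP (·.length = n) := by
  induction bs with
  | nil => simp
  | cons b bs ih =>
    rw [flatten_cons, length_append, length_cons, countP_cons,
      ih fun c hc => h c (mem_cons_of_mem b hc)]
    have hb := h b mem_cons_self
    split_ifs <;> grind

end List

namespace Language

variable {α : Type*} {S : Language α}

theorem append_mem_kstar_s12 {x y : List α} (hx : x ∈ S∗) (hy : y ∈ S∗) : x ++ y ∈ S∗ :=
  kstar_mul_kstar S ▸ append_mem_mul hx hy

theorem mem_kstar_of_mem {x : List α} (hx : x ∈ S) : x ∈ S∗ :=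
  le_kstar (a := S) hx

theorem dvd_length_of_mem_kstar_s12 {g : ℕ} (hS : ∀ w ∈ S, g ∣ w.length) {x : List α}
    (hx : x ∈ S∗) : g ∣ x.length := by
  obtain ⟨L, rfl, hL⟩ := mem_kstar.mp hx
  rw [List.length_flatten]
  exact List.dvd_sum fun k hk => by
    obtain ⟨w, hw, rfl⟩ := List.mem_map.mp hk
    exact hS w (hL w hw)

theorem eq_one_of_dvd_length_of_finite_compl_kstar [Nonempty α] {g : ℕ} (hg : g ≠ 0)
    (hS : ∀ w ∈ S, g ∣ w.length) (hcof : Set.Finite ((S∗ : Language α)ᶜ)) : g = 1 := by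
  obtain ⟨c⟩ := ‹Nonempty α›
  by_contra hg1
  refine Set.infinite_of_injective_forall_mem (s := (S∗ : Language α)ᶜ)
    (f := fun k : ℕ => List.replicate (k * g + 1) c) (fun k l hkl => ?_) (fun k hk => ?_) hcof
  · have := congrArg List.length hkl
    simp only [List.length_replicate, add_left_inj] at this
    exact Nat.eq_of_mul_eq_mul_right (Nat.pos_of_ne_zero hg) this
  · have := dvd_length_of_mem_kstar_s12 hS hk
    rw [List.length_replicate, Nat.dvd_add_right (dvd_mul_left g k), Nat.dvd_one] at this
    exact hg1 this

/-- The last factor of `ω ++ c^(n-m) ++ v`, for `ω` a longest word outside `S∗`, must be `v`. -/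
theorem mem_of_length_eq_of_finite_compl_kstar [Nonempty α] {m n : ℕ} (hmn : m < n)
    (hS : ∀ w ∈ S, w.length = m ∨ w.length = n) (hcof : Set.Finite ((S∗ : Language α)ᶜ))
    (hne : ((S∗ : Language α)ᶜ).Nonempty) {v : List α} (hv : v.length = m) : v ∈ S := by
  obtain ⟨ω, hω, hmax⟩ := Set.exists_max_image _ List.length hcof hne
  obtain ⟨c⟩ := ‹Nonempty α›
  have hz : ω ++ (List.replicate (n - m) c ++ v) ∈ S∗ := by
    by_contra hz
    have := hmax _ hz
    simp only [List.length_append, List.length_replicate] at this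
    omega
  obtain ⟨L, hzL, hL⟩ := mem_kstar.mp hz
  obtain rfl | ⟨L, b, rfl⟩ := L.eq_nil_or_concat
  · have := congrArg List.length hzL
    simp only [List.length_append, List.length_replicate, List.flatten_nil,
      List.length_nil] at this
    omega
  rw [List.concat_eq_append, List.flatten_append, List.flatten_singleton] at hzL
  have hb : b ∈ S := hL b (by simp)
  rcases hS b hb with hbm | hbn
  · rw [← List.append_assoc] at hzL
    rwa [(List.append_inj' hzL (by rw [hv, hbm])).2]
  · refine absurd ?_ hω
    rw [(List.append_inj' hzL (by simp [hv, hbn]; omega)).1]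
    exact join_mem_kstar fun y hy => hL y (by simp [hy])

theorem coprime_of_finite_compl_kstar [Nonempty α] {m n : ℕ} (hn : 0 < n)
    (hS : ∀ w ∈ S, w.length = m ∨ w.length = n) (hcof : Set.Finite ((S∗ : Language α)ᶜ)) :
    m.Coprime n :=
  eq_one_of_dvd_length_of_finite_compl_kstar (Nat.gcd_pos_of_pos_right m hn).ne'
    (fun w hw => (hS w hw).elim (· ▸ Nat.gcd_dvd_left m n) (· ▸ Nat.gcd_dvd_right m n)) hcof

theorem mem_kstar_of_dvd_length {m : ℕ} (hS : ∀ v : List α, v.length = m → v ∈ S)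
    {y : List α} (hy : m ∣ y.length) : y ∈ S∗ := by
  obtain ⟨k, hk⟩ := hy
  induction k generalizing y with
  | zero => simp_all [nil_mem_kstar]
  | succ k ih =>
    rw [← List.take_append_drop m y]
    exact append_mem_kstar_s12 (mem_kstar_of_mem (hS _ (by simp [hk, Nat.mul_succ])))
      (ih (by simp [hk, Nat.mul_succ]))

theorem notMem_of_append_append_notMem_kstar {m : ℕ} (hS : ∀ v : List α, v.length = m → v ∈ S)
    {x y z : List α} (h : x ++ y ++ z ∉ S∗) (hx : m ∣ x.length) (hz : m ∣ z.length) :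
    y ∉ S := fun hy =>
  h <| append_mem_kstar_s12 (append_mem_kstar_s12 (mem_kstar_of_dvd_length hS hx) (mem_kstar_of_mem hy))
    (mem_kstar_of_dvd_length hS hz)

end Language

namespace TauPowers

variable {α : Type*} {m n j L : ℕ}

/-- `word τ [u₁, …, uₖ] = τ u₁ τ u₂ ⋯ τ uₖ τ`; with all `|uₐ| = m` these are the words of
`(τ Σ^m)^k τ`. -/
def word (τ : List α) (us : List (List α)) : List α :=
  (us.map (τ ++ ·)).flatten ++ τ

@[simp]
theorem word_nil (τ : List α) : word τ [] = τ := by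
  simp [word]

@[simp]
theorem word_cons (τ v : List α) (us : List (List α)) :
    word τ (v :: us) = τ ++ v ++ word τ us := by
  simp [word, List.append_assoc]

theorem length_word {τ : List α} (us : List (List α)) (hu : ∀ v ∈ us, v.length = m) :
    (word τ us).length = us.length * (τ.length + m) + τ.length := by
  induction us with
  | nil => simp
  | cons v us ih =>
    rw [word_cons, List.length_append, List.length_append, ih fun w hw => hu w (by simp [hw]),
      hu v List.mem_cons_self, List.length_cons]
    ring

theorem prefix_drop_word {τ : List α} (hm : 0 < m) (us : List (List α))
    (hu : ∀ v ∈ us, v.length = m) (a : ℕ) (ha : a * (τ.length + m) ≤ (word τ us).length) :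
    τ <+: (word τ us).drop (a * (τ.length + m)) := by
  induction us generalizing a with
  | nil =>
    obtain rfl : a = 0 := by
      by_contra ha0
      rw [word_nil] at ha
      nlinarith [Nat.one_le_iff_ne_zero.mpr ha0]
    simp
  | cons v us ih =>
    rcases a with _ | a
    · simp [List.append_assoc]
    · have hlen : (τ ++ v).length = τ.length + m := by simp [hu v List.mem_cons_self]
      rw [word_cons, List.length_append, hlen, Nat.succ_mul] at ha
      rw [word_cons, Nat.succ_mul, add_comm, ← List.drop_drop, ← hlen, List.drop_left, hlen]
      exact ih (fun w hw => hu w (List.mem_cons_of_mem v hw)) a (by omega)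

theorem take_drop_notMem {S : Language α} {τ : List α} (hSm : ∀ v : List α, v.length = m → v ∈ S)
    (hτ : τ ∉ S∗) (hlen : τ.length = n + j * m) {d : ℕ} (hd : m ∣ d) (hdn : d + n ≤ τ.length) :
    (τ.drop d).take n ∉ S :=
  Language.notMem_of_append_append_notMem_kstar hSm (x := τ.take d) (z := (τ.drop d).drop n)
    (by rwa [List.append_assoc, List.take_append_drop, List.take_append_drop])
    (by rwa [List.length_take_of_le (by omega)])
    (by
      rw [List.length_drop, List.length_drop, hlen, show n + j * m - d - n = j * m - d by omega]
      exact Nat.dvd_sub (dvd_mul_left m j) hd)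

theorem dvd_mod_and_mod_add_le (hmn : m < n) (hL : L = n + j * m) {x t : ℕ}
    (hx : x = m * t + (n - m) * (x / (L + m))) (hwrap : (x + n) / (L + m) = x / (L + m)) :
    m ∣ x % (L + m) ∧ x % (L + m) + n ≤ L := by
  obtain ⟨r, rfl⟩ := Nat.exists_eq_add_of_le hmn.le
  rw [Nat.add_sub_cancel_left] at hx
  set a := x / (L + m)
  set d := x % (L + m)
  have hxad : x = (L + m) * a + d := (Nat.div_add_mod x (L + m)).symm
  have hdn : d + (m + r) < L + m := by
    rw [hxad, add_assoc, Nat.mul_add_div (by omega), add_eq_left, Nat.div_eq_zero_iff] at hwrap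
    omega
  obtain ⟨c, hc⟩ : m ∣ d := by
    have : m * t = m * ((j + 2) * a) + d := by
      have : (L + m) * a = r * a + m * ((j + 2) * a) := by rw [hL]; ring
      omega
    exact (Nat.dvd_add_right (dvd_mul_right m _)).mp (this ▸ dvd_mul_right m t)
  refine ⟨⟨c, hc⟩, ?_⟩
  have hcj : c ≤ j := by
    have : m * c < m * (j + 1) := by rw [hL] at hdn; linarith
    exact Nat.lt_succ_iff.mp (Nat.lt_of_mul_lt_mul_left this)
  rw [hc, hL]
  nlinarith [Nat.mul_le_mul_left m hcj]

theorem modEq_of_coprime (hcop : m.Coprime n) (hmn : m ≤ n) (hL : L = n + j * m)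
    {N β K : ℕ} (h : m * N + (n - m) * β = K * (L + m) + L) : β ≡ K + 1 [MOD m] := by
  rw [← Nat.coprime_sub_self_right hmn] at hcop
  obtain ⟨r, rfl⟩ := Nat.exists_eq_add_of_le hmn
  rw [Nat.add_sub_cancel_left] at h hcop
  refine Nat.ModEq.cancel_left_of_coprime hcop ?_
  have : r * (K + 1) + m * (K * (j + 2) + j + 1) = m * N + r * β := by rw [h, hL]; ring
  calc r * β ≡ m * N + r * β [MOD m] := (Nat.mul_add_mod_self_left ..).symm
    _ = r * (K + 1) + m * (K * (j + 2) + j + 1) := this.symm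
    _ ≡ r * (K + 1) [MOD m] := Nat.add_mul_mod_self_left ..

theorem countP_length_eq_le_div {S : Language α} {τ w : List α} (hmn : m < n)
    (hτ : τ.length = n + j * m) (hS : ∀ v ∈ S, v.length = m ∨ v.length = n)
    (hwin : ∀ d, m ∣ d → d + n ≤ τ.length → (τ.drop d).take n ∉ S)
    (hper : ∀ a, a * (τ.length + m) ≤ w.length → τ <+: w.drop (a * (τ.length + m)))
    (bs : List (List α)) (hbs : ∀ b ∈ bs, b ∈ S) (hpre : bs.flatten <+: w) :
    bs.countP (·.length = n) ≤ bs.flatten.length / (τ.length + m) := by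
  induction bs using List.reverseRecOn with
  | nil => simp
  | append_singleton p b ih =>
    have hbS : b ∈ S := hbs b (by simp)
    rw [List.flatten_append, List.flatten_singleton] at hpre
    specialize ih (fun c hc => hbs c (by simp [hc])) (List.prefix_append _ _ |>.trans hpre)
    rw [List.countP_append, List.flatten_append, List.flatten_singleton, List.length_append]
    rcases hS b hbS with hb | hb
    · simp only [hb, List.countP_singleton, hmn.ne, decide_false, Bool.false_eq_true, if_false,
        add_zero]
      exact ih.trans (Nat.div_le_div_right (by omega))
    · simp only [hb, List.countP_singleton, decide_true, if_true]
      by_contra hlt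
      set x := p.flatten.length
      set a := x / (τ.length + m)
      have hmono := Nat.div_le_div_right (c := τ.length + m) (Nat.le_add_right x n)
      have hβ : p.countP (·.length = n) = a := by omega
      have hwrap : (x + n) / (τ.length + m) = a := by omega
      have hx := List.length_flatten_eq_of_length_eq_or_eq hmn.le p
        (fun c hc => hS c (hbs c (by simp [hc])))
      rw [hβ] at hx
      obtain ⟨hd, hdn⟩ := dvd_mod_and_mod_add_le hmn hτ hx hwrap
      have hblock : b = (w.drop x).take n := by
        obtain ⟨t, rfl⟩ := hpre
        simp [x, ← hb]
      have hxM : a * (τ.length + m) + x % (τ.length + m) = x := by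
        rw [mul_comm]; exact Nat.div_add_mod x _
      have haw : a * (τ.length + m) ≤ w.length := calc
        a * (τ.length + m) ≤ x := Nat.div_mul_le_self x _
        _ ≤ w.length := by simpa [x] using (List.prefix_append _ _ |>.trans hpre).length_le
      refine hwin _ hd hdn ?_
      rw [← (hper a haw).take_drop_eq hdn, List.drop_drop, hxM, ← hblock]
      exact hbS

end TauPowers

theorem tau_powers_omitted_general {α : Type} (m n : ℕ) (hmn : m < n)
    (S : Language α) (hS : ∀ w ∈ S, w.length = m ∨ w.length = n)
    (hcof : Set.Finite ((S∗ : Language α)ᶜ))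
    (τ : List α) (hτ : τ ∉ (S∗ : Language α)) (j : ℕ) (hlen : τ.length = n + j * m) :
    ∀ i : ℕ, 1 ≤ i → i < m →
      ∀ u : Fin (i - 1) → List α, (∀ a, (u a).length = m) →
        (List.ofFn (fun a => τ ++ u a)).flatten ++ τ ∉ (S∗ : Language α) := by
  intro i hi him u hu hw
  obtain ⟨c, -⟩ := List.exists_mem_of_length_pos (show 0 < τ.length by omega)
  have : Nonempty α := ⟨c⟩
  have hSm (v : List α) (hv : v.length = m) : v ∈ S :=
    Language.mem_of_length_eq_of_finite_compl_kstar hmn hS hcof ⟨τ, hτ⟩ hv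
  have hu' : ∀ v ∈ List.ofFn u, v.length = m := by simpa [List.mem_ofFn] using hu
  have hw' : TauPowers.word τ (List.ofFn u) ∈ S∗ := by
    rwa [TauPowers.word, List.map_ofFn]
  obtain ⟨bs, hbs, hbsS⟩ := Language.mem_kstar.mp hw'
  have hcount := TauPowers.countP_length_eq_le_div hmn hlen hS
    (fun _ => TauPowers.take_drop_notMem hSm hτ hlen)
    (TauPowers.prefix_drop_word (by omega) _ hu') bs hbsS (hbs ▸ List.prefix_rfl)
  have hwlen : bs.flatten.length = (i - 1) * (τ.length + m) + τ.length := by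
    rw [← hbs, TauPowers.length_word _ hu', List.length_ofFn]
  have hmod := TauPowers.modEq_of_coprime (N := bs.length) (K := i - 1)
    (Language.coprime_of_finite_compl_kstar (by omega) hS hcof) hmn.le hlen
    (by rw [← List.length_flatten_eq_of_length_eq_or_eq hmn.le bs fun b hb => hS b (hbsS b hb),
      hwlen])
  rw [hwlen, add_comm, Nat.add_mul_div_right _ _ (by omega), Nat.div_eq_of_lt (by omega),
    zero_add] at hcount
  rw [Nat.sub_add_cancel hi, Nat.ModEq, Nat.mod_eq_of_lt (by omega), Nat.mod_eq_of_lt him] at hmod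
  omega

/-- Let `0 < m < n < 2m`, `S ⊆ Σ^m ∪ Σ^n` with `S∗` co-finite, and let `τ`
be a word not in `S∗` with `|τ| = n + j·m` for some `j ≥ 0`. Then for `1 ≤ i < m`, the
language `(τ Σ^m)^{i−1} τ` is disjoint from `S∗`. -/
theorem tau_powers_omitted {α : Type} [Fintype α] (m n : ℕ)
    (hm : 0 < m) (hmn : m < n) (hn2m : n < 2 * m)
    (S : Language α) (hS : ∀ w ∈ S, w.length = m ∨ w.length = n)
    (hcof : Set.Finite ((S∗ : Language α)ᶜ))
    (τ : List α) (hτ : τ ∉ (S∗ : Language α)) (j : ℕ) (hlen : τ.length = n + j * m) :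
    ∀ i : ℕ, 1 ≤ i → i < m →
      ∀ u : Fin (i - 1) → List α, (∀ a, (u a).length = m) →
        (List.ofFn (fun a => τ ++ u a)).flatten ++ τ ∉ (S∗ : Language α) :=
  tau_powers_omitted_general m n hmn S hS hcof τ hτ j hlen
end
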